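/- arXiv:0810.1176 — 4 statements merged into one kernel-verified Lean document; each statement's English description precedes it below -/
import Mathlib

section
/- An element a = (a₁,a₂,a₃,a₄) ∈ Q satisfies a² = (0,0,0,0) if and only if a₁ = 0 and a₂ = 0. Consequently, every involution of Q lies in the subgroup Q³ = {(0,0,a₃,a₄) : a₃, a₄ ∈ F}, and every nonidentity element of Q³ is an involution. -/
noncomputable section

/-- `F` is the field `GF(8)` with 8 elements (characteristic 2). -/
abbrev F : Type := GaloisField 2 3

/-- The trace map `Tr : F → F`, `Tr α = α + α² + α⁴`. -/
def Tr (α : F) : F := α + α ^ 2 + α ^ 4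

theorem Tr_zero : Tr 0 = 0 := by simp [Tr]

theorem F.pow8 (x : F) : x ^ 8 = x := by
  haveI : Fintype F := Fintype.ofFinite F
  have h := FiniteField.pow_card x
  rwa [← Nat.card_eq_fintype_card, GaloisField.card 2 3 (by norm_num)] at h

theorem F.add_sq (x y : F) : (x + y) ^ 2 = x ^ 2 + y ^ 2 := CharTwo.add_sq x y

theorem F.add_pow4 (x y : F) : (x + y) ^ 4 = x ^ 4 + y ^ 4 := by
  rw [show (4 : ℕ) = 2 * 2 from rfl, pow_mul, pow_mul, pow_mul, F.add_sq, F.add_sq]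

theorem F.two (x : F) : x + x = 0 := CharTwo.add_self_eq_zero x

/-- The group `Q = 1 + J` of the paper, coded as quadruples of coefficients. -/
structure Q : Type where
  a1 : F
  a2 : F
  a3 : F
  a4 : F

namespace Q

instance : Mul Q :=
  ⟨fun a b =>
    ⟨a.a1 + b.a1, a.a2 + b.a2 + a.a1 * b.a1 ^ 2,
      a.a3 + b.a3 + a.a1 * b.a2 ^ 2 + a.a2 * b.a1 ^ 4,
      a.a4 + b.a4 + a.a1 * b.a3 ^ 2 + a.a2 * b.a2 ^ 4 + a.a3 * b.a1⟩⟩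

theorem mul_def (a b : Q) :
    a * b =
      ⟨a.a1 + b.a1, a.a2 + b.a2 + a.a1 * b.a1 ^ 2,
        a.a3 + b.a3 + a.a1 * b.a2 ^ 2 + a.a2 * b.a1 ^ 4,
        a.a4 + b.a4 + a.a1 * b.a3 ^ 2 + a.a2 * b.a2 ^ 4 + a.a3 * b.a1⟩ :=
  rfl

instance : One Q := ⟨⟨0, 0, 0, 0⟩⟩

theorem one_def : (1 : Q) = ⟨0, 0, 0, 0⟩ := rfl

instance : Inv Q :=
  ⟨fun a =>
    ⟨a.a1, a.a2 + a.a1 ^ 3,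
      a.a3 + a.a1 * (a.a2 + a.a1 ^ 3) ^ 2 + a.a2 * a.a1 ^ 4,
      a.a4 + a.a1 * (a.a3 + a.a1 * (a.a2 + a.a1 ^ 3) ^ 2 + a.a2 * a.a1 ^ 4) ^ 2 +
        a.a2 * (a.a2 + a.a1 ^ 3) ^ 4 + a.a3 * a.a1⟩⟩

theorem inv_def (a : Q) :
    a⁻¹ =
      ⟨a.a1, a.a2 + a.a1 ^ 3,
        a.a3 + a.a1 * (a.a2 + a.a1 ^ 3) ^ 2 + a.a2 * a.a1 ^ 4,
        a.a4 + a.a1 * (a.a3 + a.a1 * (a.a2 + a.a1 ^ 3) ^ 2 + a.a2 * a.a1 ^ 4) ^ 2 +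
          a.a2 * (a.a2 + a.a1 ^ 3) ^ 4 + a.a3 * a.a1⟩ :=
  rfl

theorem pr8 (x : F) : x ^ 8 = x := F.pow8 x
theorem pr9 (x : F) : x ^ 9 = x ^ 2 := by rw [show (9:ℕ) = 1+8 from rfl, pow_add, F.pow8]; ring
theorem pr10 (x : F) : x ^ 10 = x ^ 3 := by rw [show (10:ℕ) = 2+8 from rfl, pow_add, F.pow8]; ring
theorem pr11 (x : F) : x ^ 11 = x ^ 4 := by rw [show (11:ℕ) = 3+8 from rfl, pow_add, F.pow8]; ring
theorem pr12 (x : F) : x ^ 12 = x ^ 5 := by rw [show (12:ℕ) = 4+8 from rfl, pow_add, F.pow8]; ring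
theorem pr13 (x : F) : x ^ 13 = x ^ 6 := by rw [show (13:ℕ) = 5+8 from rfl, pow_add, F.pow8]; ring
theorem pr14 (x : F) : x ^ 14 = x ^ 7 := by rw [show (14:ℕ) = 6+8 from rfl, pow_add, F.pow8]; ring
theorem pr15 (x : F) : x ^ 15 = x := by rw [show (15:ℕ) = 7+8 from rfl, pow_add, F.pow8, ← pow_succ, F.pow8]
theorem pr16 (x : F) : x ^ 16 = x ^ 2 := by rw [show (16:ℕ) = 8+8 from rfl, pow_add, F.pow8]; ring
theorem pr17 (x : F) : x ^ 17 = x ^ 3 := by rw [show (17:ℕ) = 9+8 from rfl, pow_add, F.pow8, pr9]; ring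
theorem pr18 (x : F) : x ^ 18 = x ^ 4 := by rw [show (18:ℕ) = 10+8 from rfl, pow_add, F.pow8, pr10]; ring
theorem pr19 (x : F) : x ^ 19 = x ^ 5 := by rw [show (19:ℕ) = 11+8 from rfl, pow_add, F.pow8, pr11]; ring
theorem pr20 (x : F) : x ^ 20 = x ^ 6 := by rw [show (20:ℕ) = 12+8 from rfl, pow_add, F.pow8, pr12]; ring

theorem mul_assoc' (a b c : Q) : a * b * c = a * (b * c) := by
  obtain ⟨a1, a2, a3, a4⟩ := a
  obtain ⟨b1, b2, b3, b4⟩ := b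
  obtain ⟨c1, c2, c3, c4⟩ := c
  simp only [mul_def, mk.injEq]
  refine ⟨by ring, ?_, ?_, ?_⟩ <;>
  · simp only [F.add_sq, F.add_pow4, mul_pow]
    ring_nf
    try simp only [pr8, pr9, pr10, pr11, pr12, pr13, pr14, pr15, pr16, pr17, pr18, pr19, pr20]
    try ring_nf

theorem one_mul' (a : Q) : 1 * a = a := by
  obtain ⟨a1, a2, a3, a4⟩ := a
  simp only [one_def, mul_def, mk.injEq]
  refine ⟨by ring, by ring, by ring, by ring⟩


theorem mul_one' (a : Q) : a * 1 = a := by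
  obtain ⟨a1, a2, a3, a4⟩ := a
  simp only [one_def, mul_def, mk.injEq]
  refine ⟨by ring, by ring, by ring, by ring⟩

theorem inv_mul_cancel' (a : Q) : a⁻¹ * a = 1 := by
  obtain ⟨a1, a2, a3, a4⟩ := a
  show Q.mk _ _ _ _ * _ = _
  simp only [one_def, mul_def, mk.injEq]
  refine ⟨?_, ?_, ?_, ?_⟩ <;>
  · try simp only [F.add_sq, F.add_pow4, mul_pow]
    try ring_nf
    try simp only [pr8, pr9, pr10, pr11, pr12, pr13, pr14, pr15, pr16, pr17, pr18, pr19, pr20]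
    try ring_nf
    try simp [CharTwo.two_eq_zero]
    try ring_nf
    try simp [CharTwo.two_eq_zero]

instance : Group Q where
  mul_assoc := mul_assoc'
  one_mul := one_mul'
  mul_one := mul_one'
  inv_mul_cancel := inv_mul_cancel'

end Q

namespace Q

/-- The subgroup `Q³ = {(0,0,a₃,a₄) : a₃, a₄ ∈ F}` of `Q`. -/
def Q3 : Subgroup Q where
  carrier := {a : Q | a.a1 = 0 ∧ a.a2 = 0}
  one_mem' := ⟨rfl, rfl⟩
  mul_mem' := by
    rintro a b ⟨ha1, ha2⟩ ⟨hb1, hb2⟩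
    exact ⟨by simp [mul_def, ha1, hb1], by simp [mul_def, ha1, ha2, hb1, hb2]⟩
  inv_mem' := by
    rintro a ⟨ha1, ha2⟩
    exact ⟨by simp [inv_def, ha1], by simp [inv_def, ha1, ha2]⟩

theorem mem_Q3_iff (a : Q) : a ∈ Q3 ↔ a.a1 = 0 ∧ a.a2 = 0 := Iff.rfl

theorem mul_self_eq (a : Q) :
    a * a = ⟨0, a.a1 ^ 3, a.a1 * a.a2 ^ 2 + a.a2 * a.a1 ^ 4,
      a.a1 * a.a3 ^ 2 + a.a2 ^ 5 + a.a3 * a.a1⟩ := by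
  rw [mul_def, mk.injEq]
  exact ⟨F.two a.a1, by linear_combination F.two a.a2, by linear_combination F.two a.a3,
    by linear_combination F.two a.a4⟩

theorem mul_self_eq_one_iff (a : Q) : a * a = 1 ↔ a.a1 = 0 ∧ a.a2 = 0 := by
  rw [mul_self_eq, one_def, mk.injEq]
  constructor
  · rintro ⟨-, h1, -, h2⟩
    have ha1 : a.a1 = 0 := eq_zero_of_pow_eq_zero h1
    rw [ha1, mul_zero, zero_mul, zero_add, add_zero] at h2
    exact ⟨ha1, eq_zero_of_pow_eq_zero h2⟩
  · rintro ⟨ha1, ha2⟩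
    simp [ha1, ha2]

/-- `a² = 1` in `Q` iff `a₁ = 0` and `a₂ = 0`; hence every involution of `Q` lies in
`Q³ = {(0,0,a₃,a₄)}`, and every nonidentity element of `Q³` is an involution. -/
theorem involutions_of_Q :
    (∀ a : Q, a * a = 1 ↔ a.a1 = 0 ∧ a.a2 = 0) ∧
      (∀ a : Q, a * a = 1 → a ≠ 1 → a ∈ Q3) ∧
      (∀ a : Q, a ∈ Q3 → a ≠ 1 → a * a = 1) :=
  ⟨mul_self_eq_one_iff, fun a h _ => (mem_Q3_iff a).mpr ((mul_self_eq_one_iff a).mp h),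
    fun a h _ => (mul_self_eq_one_iff a).mpr ((mem_Q3_iff a).mp h)⟩

end Q
end
end

section
/- Let b = (0,0,b₃,b₄) ∈ Q with Tr(b₃) = 0 and b₃ ≠ 0. Then the centralizer of b in Q is exactly the subgroup Q² = {(0,a₂,a₃,a₄) : a₂,a₃,a₄ ∈ F}; in particular this centralizer has index 8 in Q, so the conjugacy class of b in Q has size 8. -/
noncomputable section

/-! Comparing fourth coordinates, `a` commutes with `b = (0,0,b₃,b₄)` exactly when
`a₁ b₃ = a₁ b₃²`. Since `Tr 1 = 1`, the trace condition rules out `b₃ = 1`, so with `b₃ ≠ 0`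
this forces `a₁ = 0`. The centralizer is therefore the kernel of the surjection `a ↦ a₁` onto
`(F, +)`, of index `|F| = 8`, and by orbit–stabilizer this index is the size of the
conjugacy class. -/

theorem ncard_setOf_isConj_eq_index_centralizer {G : Type*} [Group G] (g : G) :
    {c : G | IsConj g c}.ncard = (Subgroup.centralizer {g}).index := by
  have horbit : {c : G | IsConj g c} = MulAction.orbit (ConjAct G) g := by
    ext c
    rw [Set.mem_ofPred_eq, ConjAct.mem_orbit_conjAct, isConj_comm]
  rw [horbit, ← MulAction.index_stabilizer, Subgroup.centralizer_eq_comap_stabilizer]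
  exact (Subgroup.index_comap_of_surjective _ ConjAct.toConjAct.surjective).symm

theorem F.card_eq : Nat.card F = 8 := GaloisField.card 2 3 (by norm_num)

theorem ne_one_of_Tr_eq_zero {α : F} (h : Tr α = 0) : α ≠ 1 := by
  rintro rfl
  simp [Tr, F.two] at h

namespace Q

/-- Its kernel is the subgroup `Q²` of the paper. -/
def a1Hom : Q →* Multiplicative F where
  toFun a := Multiplicative.ofAdd a.a1
  map_one' := rfl
  map_mul' _ _ := rfl

theorem mem_ker_a1Hom {a : Q} : a ∈ a1Hom.ker ↔ a.a1 = 0 :=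
  ofAdd_eq_one

theorem index_ker_a1Hom : a1Hom.ker.index = 8 := by
  have hsurj : Function.Surjective a1Hom := fun x => ⟨⟨x.toAdd, 0, 0, 0⟩, rfl⟩
  rw [Subgroup.index_ker, MonoidHom.range_eq_top.mpr hsurj, Subgroup.card_top,
    Nat.card_congr Multiplicative.toAdd, F.card_eq]

theorem commute_mk_zero_zero_iff (b3 b4 : F) (a : Q) :
    Commute (⟨0, 0, b3, b4⟩ : Q) a ↔ a.a1 * b3 = a.a1 * b3 ^ 2 := by
  obtain ⟨a1, a2, a3, a4⟩ := a
  simp only [Commute, SemiconjBy, mul_def, mk.injEq]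
  constructor
  · rintro ⟨-, -, -, h⟩
    linear_combination h
  · intro h
    exact ⟨by ring, by ring, by ring, by linear_combination h⟩

theorem commute_mk_zero_zero_iff_a1_eq_zero {b3 : F} (b4 : F) (hb3 : b3 ≠ 0) (hb3' : b3 ≠ 1)
    (a : Q) : Commute (⟨0, 0, b3, b4⟩ : Q) a ↔ a.a1 = 0 := by
  have hsq : b3 ≠ b3 ^ 2 := fun h =>
    hb3' (mul_left_cancel₀ hb3 (by linear_combination -h))
  rw [commute_mk_zero_zero_iff]
  refine ⟨fun h => ?_, fun h => by rw [h, zero_mul, zero_mul]⟩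
  by_contra ha
  exact hsq (mul_left_cancel₀ ha h)

/-- For `b = (0,0,b₃,b₄)` with `Tr b₃ = 0` and `b₃ ≠ 0`, the centralizer of `b` in `Q`
is exactly `Q² = {(0,a₂,a₃,a₄)}`; it has index `8` in `Q`, so the conjugacy class of
`b` in `Q` has size `8`. -/
theorem centralizer_of_Q3_element (b3 b4 : F) (htr : Tr b3 = 0) (hb3 : b3 ≠ 0) :
    (Subgroup.centralizer {(⟨0, 0, b3, b4⟩ : Q)} : Set Q) = {a : Q | a.a1 = 0} ∧
      (Subgroup.centralizer {(⟨0, 0, b3, b4⟩ : Q)}).index = 8 ∧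
      Set.ncard {c : Q | IsConj (⟨0, 0, b3, b4⟩ : Q) c} = 8 := by
  have hcent : Subgroup.centralizer {(⟨0, 0, b3, b4⟩ : Q)} = a1Hom.ker := by
    ext a
    rw [Subgroup.mem_centralizer_singleton_iff, mem_ker_a1Hom, eq_comm,
      ← commute_mk_zero_zero_iff_a1_eq_zero b4 hb3 (ne_one_of_Tr_eq_zero htr)]
    rfl
  refine ⟨by rw [hcent]; exact Set.ext fun _ => mem_ker_a1Hom, by rw [hcent, index_ker_a1Hom], ?_⟩
  rw [ncard_setOf_isConj_eq_index_centralizer, hcent, index_ker_a1Hom]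

end Q
end
end

section
/- The element b = (0,1,0,0) of Q has inverse b⁻¹ = (0,1,0,1), and b is not conjugate to b⁻¹ in Q: there is no a ∈ Q with a⁻¹·b·a = b⁻¹. -/
noncomputable section

/-! Conjugating `b = 1 + x²` to `b⁻¹` by `a` means `b * a = a * b⁻¹`, whose last coordinate reads
`a₄ + a₂⁴ = a₄ + a₂ + 1`. But no `x ∈ F` satisfies `x⁴ = x + 1`: the trace is invariant under
Frobenius, so `Tr (x⁴) = Tr x`, whereas `Tr (x + 1) = Tr x + 1` because `Tr 1 = 1 + 1 + 1 = 1`. -/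

theorem Tr_add (x y : F) : Tr (x + y) = Tr x + Tr y := by
  simp only [Tr, F.add_sq, F.add_pow4]
  ring

theorem Tr_one : Tr 1 = 1 := by
  simp only [Tr, one_pow, F.two, zero_add]

theorem Tr_sq (x : F) : Tr (x ^ 2) = Tr x := by
  simp only [Tr, ← pow_mul, show 2 * 4 = 8 from rfl, F.pow8]
  ring

theorem Tr_pow_four (x : F) : Tr (x ^ 4) = Tr x := by
  rw [show x ^ 4 = (x ^ 2) ^ 2 by ring, Tr_sq, Tr_sq]

theorem pow_four_ne_add_one (x : F) : x ^ 4 ≠ x + 1 := by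
  intro h
  have hTr := congrArg Tr h
  rw [Tr_pow_four, Tr_add, Tr_one, left_eq_add] at hTr
  exact one_ne_zero hTr

namespace Q

def b : Q := ⟨0, 1, 0, 0⟩

theorem b_inv : b⁻¹ = ⟨0, 1, 0, 1⟩ := by
  simp [b, inv_def]

theorem inv_mul_b_mul_eq_b_inv_iff (a : Q) :
    a⁻¹ * b * a = b⁻¹ ↔ a.a1 ^ 4 = a.a1 ∧ a.a2 ^ 4 = a.a2 + 1 := by
  rw [mul_assoc, inv_mul_eq_iff_eq_mul, b_inv]
  simp only [b, mul_def, mk.injEq]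
  constructor
  · rintro ⟨-, -, h3, h4⟩
    exact ⟨by linear_combination h3, by linear_combination h4⟩
  · rintro ⟨h1, h2⟩
    exact ⟨by ring, by ring, by linear_combination h1, by linear_combination h2⟩

/-- The element `b = (0,1,0,0)` of `Q` (i.e. `1 + x²`) has inverse `b⁻¹ = (0,1,0,1)`,
and `b` is not conjugate to `b⁻¹` in `Q`. -/
theorem b_not_conjugate_to_inverse :
    (⟨0, 1, 0, 0⟩ : Q)⁻¹ = ⟨0, 1, 0, 1⟩ ∧
      ¬∃ a : Q, a⁻¹ * ⟨0, 1, 0, 0⟩ * a = (⟨0, 1, 0, 1⟩ : Q) := by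
  refine ⟨b_inv, fun ⟨a, h⟩ => ?_⟩
  have hconj : a⁻¹ * b * a = b⁻¹ := by rwa [b_inv]
  exact pow_four_ne_add_one a.a2 ((inv_mul_b_mul_eq_b_inv_iff a).1 hconj).2

end Q
end
end

section
/- There exists a subgroup P of Q of index 2 (i.e. with 2048 elements) that is invariant under the automorphism φ_c for every nonzero c ∈ F and under the automorphism σ. -/
noncomputable section

theorem sq_Tr (x : F) : Tr x ^ 2 = Tr x := by
  simp only [Tr, F.add_sq, ← pow_mul, Nat.reduceMul, F.pow8]; ring

theorem Tr_add_sq_self (x : F) : Tr (x + x ^ 2) = 0 := by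
  rw [Tr_add, Tr_sq, F.two]

theorem F.pow_seven_eq_one {c : F} (hc : c ≠ 0) : c ^ 7 = 1 :=
  mul_right_cancel₀ hc (by rw [← pow_succ, F.pow8, one_mul])

theorem F.add_pow_seven (x y : F) :
    (x + y) ^ 7 = x ^ 7 + y ^ 7 + Tr (x ^ 3 * y ^ 4 + x ^ 2 * y ^ 5) := by
  rw [show (x + y) ^ 7 = (x + y) * (x + y) ^ 2 * (x + y) ^ 4 by ring]
  simp only [Tr, F.add_sq, F.add_pow4, mul_pow, ← pow_mul, Nat.reduceMul, F.pow8, Q.pr10, Q.pr12,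
    Q.pr16, Q.pr20]
  ring

namespace Q

/-- The map `φ_c` (conjugation by the constant `c ∈ F⁺`). -/
def phi (c : F) (a : Q) : Q := ⟨a.a1 * c, a.a2 * c ^ 3, a.a3, a.a4 * c⟩

/-- The map `σ` (the Frobenius automorphism of `F` applied coordinatewise). -/
def sigma (a : Q) : Q := ⟨a.a1 ^ 2, a.a2 ^ 2, a.a3 ^ 2, a.a4 ^ 2⟩

def parity (a : Q) : F := Tr (a.a3 + a.a1 * a.a2 ^ 2) + a.a1 ^ 7

theorem parity_mul (a b : Q) : parity (a * b) = parity a + parity b := by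
  obtain ⟨a1, a2, a3, a4⟩ := a
  obtain ⟨b1, b2, b3, b4⟩ := b
  have hTr_arg : a3 + b3 + a1 * b2 ^ 2 + a2 * b1 ^ 4 + (a1 + b1) * (a2 + b2 + a1 * b1 ^ 2) ^ 2 =
      (a3 + a1 * a2 ^ 2) + (b3 + b1 * b2 ^ 2) + (a2 * b1 ^ 4 + (a2 * b1 ^ 4) ^ 2) +
        (a1 ^ 3 * b1 ^ 4 + a1 ^ 2 * b1 ^ 5) := by
    simp only [F.add_sq, mul_pow, ← pow_mul, Nat.reduceMul]
    linear_combination (-a2 ^ 2) * F.pow8 b1 + F.two (a1 * b2 ^ 2)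
  simp only [parity, mul_def]
  rw [hTr_arg, Tr_add, Tr_add, Tr_add, Tr_add_sq_self, F.add_pow_seven]
  linear_combination F.two (Tr (a1 ^ 3 * b1 ^ 4 + a1 ^ 2 * b1 ^ 5))

theorem parity_sq (a : Q) : parity a ^ 2 = parity a := by
  rw [parity, F.add_sq, sq_Tr, ← pow_mul, pr14]

theorem parity_eq_zero_or_one (a : Q) : parity a = 0 ∨ parity a = 1 :=
  IsIdempotentElem.iff_eq_zero_or_one.mp (by rw [IsIdempotentElem, ← sq, parity_sq])

theorem parity_phi {c : F} (hc : c ≠ 0) (a : Q) : parity (phi c a) = parity a := by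
  have h7 := F.pow_seven_eq_one hc
  simp only [parity, phi]
  rw [show a.a1 * c * (a.a2 * c ^ 3) ^ 2 = a.a1 * a.a2 ^ 2 * c ^ 7 by ring, mul_pow, h7, mul_one,
    mul_one]

theorem parity_sigma (a : Q) : parity (sigma a) = parity a := by
  simp only [parity, sigma]
  rw [show a.a3 ^ 2 + a.a1 ^ 2 * (a.a2 ^ 2) ^ 2 = (a.a3 + a.a1 * a.a2 ^ 2) ^ 2 by
    rw [F.add_sq]; ring, Tr_sq, ← pow_mul, pr14]

def parityHom : Q →* Multiplicative F :=
  MonoidHom.mk' (fun a => Multiplicative.ofAdd (parity a)) fun a b => by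
    rw [parity_mul, ofAdd_add]

theorem mem_ker_parityHom {a : Q} : a ∈ parityHom.ker ↔ parity a = 0 :=
  MonoidHom.mem_ker.trans ofAdd_eq_one

theorem index_ker_parityHom : parityHom.ker.index = 2 := by
  refine Subgroup.index_eq_two_iff.mpr ⟨⟨1, 0, 0, 0⟩, fun b => ?_⟩
  have h1 : parity ⟨1, 0, 0, 0⟩ = 1 := by simp [parity, Tr]
  simp only [mem_ker_parityHom, parity_mul, h1]
  rcases parity_eq_zero_or_one b with h | h <;> simp [h, F.two]

theorem card_Q : Nat.card Q = 4096 := by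
  let e : Q ≃ F × F × F × F :=
    { toFun a := (a.a1, a.a2, a.a3, a.a4)
      invFun p := ⟨p.1, p.2.1, p.2.2.1, p.2.2.2⟩ }
  simp [Nat.card_congr e, GaloisField.card 2 3 (by norm_num)]

/-- There is a subgroup `P` of `Q` of index `2` (so with `2048` elements) invariant
under `φ_c` for every nonzero `c ∈ F` and under `σ`. -/
theorem exists_invariant_index_two_subgroup :
    ∃ P : Subgroup Q, P.index = 2 ∧ Nat.card P = 2048 ∧
      (∀ c : F, c ≠ 0 → ∀ x ∈ P, phi c x ∈ P) ∧ (∀ x ∈ P, sigma x ∈ P) := by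
  refine ⟨parityHom.ker, index_ker_parityHom, ?_, ?_, ?_⟩
  · have h := parityHom.ker.card_mul_index
    rw [index_ker_parityHom, card_Q] at h
    omega
  · intro c hc x
    simp only [mem_ker_parityHom, parity_phi hc, imp_self]
  · intro x
    simp only [mem_ker_parityHom, parity_sigma, imp_self]

end Q
end
end
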